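/- arXiv:2108.01332 — 2 statements merged into one kernel-verified Lean document; each statement's English description precedes it below -/
import Mathlib

section
/- For the Hata random map with probabilities (1/2,1/2), the measure μ is invariant for the random map: for every Borel set B ⊆ [0,1], (1/2)·μ(τ₁⁻¹(B)) + (1/2)·μ(τ₂⁻¹(B)) = μ(B). -/
/-
The density `h` of `μ` is a fixed point of the transfer operator of the random map,
`P h (y) = ½ ∑ᵢ ∑_{τᵢ x = y} h x / |τᵢ' x|`. Each `τᵢ` has two affine branches, so a change of
variables turns `μ (τᵢ⁻¹ B)` into `∫_B Pᵢ h`. Almost every `y ∈ [0,1]` lies in some `I_k^±`.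
For `y ∈ I_k^-` the inverse branches `2y, (y+1)/2, y/2` land in `I_{k-1}^-` (outside the
domain of that branch when `k = 0`), `I_0^+` and `I_{k+1}^-`, while `2y - 1` is out of range, so
`P h = h` reads `(2^k - 1) + 1/4 + (2^(k+2) - 1)/4 = 2^(k+1) - 1`; `I_k^+` is symmetric.
-/

open MeasureTheory Set
open scoped ENNReal

noncomputable section

/-- First Hata map: `τ₁(x) = x/2` on `(0,1/2)`, `τ₁(x) = 2x-1` on `(1/2,1)`. -/
def tau1 : ℝ → ℝ := fun x => if x < 1/2 then x/2 else 2*x - 1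

/-- Second Hata map: `τ₂(x) = 2x` on `(0,1/2)`, `τ₂(x) = (x+1)/2` on `(1/2,1)`. -/
def tau2 : ℝ → ℝ := fun x => if x < 1/2 then 2*x else (x+1)/2

/-- The interval `I_k^- = (2^{-(k+2)}, 2^{-(k+1)})`. -/
def Im (k : ℕ) : Set ℝ := Set.Ioo ((1:ℝ)/2^(k+2)) ((1:ℝ)/2^(k+1))

/-- The interval `I_k^+ = (1-2^{-(k+1)}, 1-2^{-(k+2)})`. -/
def Ip (k : ℕ) : Set ℝ := Set.Ioo (1 - (1:ℝ)/2^(k+1)) (1 - (1:ℝ)/2^(k+2))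

/-- The density `h` of the invariant measure: `h = 2^{k+1}-1` on `I_k^- ∪ I_k^+`. -/
def hataDensity : ℝ → ℝ≥0∞ :=
  fun x => ∑' k : ℕ, ((2:ℝ≥0∞)^(k+1) - 1) * Set.indicator (Im k ∪ Ip k) (fun _ => (1:ℝ≥0∞)) x

/-- The invariant measure `μ` of the Hata map, `μ(dx) = h(x) dx`. -/
def muH : Measure ℝ := volume.withDensity hataDensity

open scoped Function NNReal

lemma lintegral_comp_mul_add (F : ℝ → ℝ≥0∞) {c : ℝ} (hc : c ≠ 0) (d : ℝ) :
    ∫⁻ y, F (c * y + d) = ENNReal.ofReal |c⁻¹| * ∫⁻ x, F x := calc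
  ∫⁻ y, F (c * y + d) = ∫⁻ x, F (x + d) ∂Measure.map (c * ·) volume :=
    (lintegral_map_equiv (fun x => F (x + d)) (Homeomorph.mulLeft₀ c hc).toMeasurableEquiv).symm
  _ = ENNReal.ofReal |c⁻¹| * ∫⁻ x, F x := by
    rw [Real.map_volume_mul_left hc, lintegral_smul_measure, smul_eq_mul,
      lintegral_add_right_eq_self]

lemma measure_piecewise_preimage {α β : Type*} [MeasurableSpace α] (μ : Measure α) {s : Set α}
    [∀ x, Decidable (x ∈ s)] (hs : MeasurableSet s) (f g : α → β) (B : Set β) :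
    μ (s.piecewise f g ⁻¹' B) = μ (f ⁻¹' B ∩ s) + μ (g ⁻¹' B \ s) := by
  rw [← measure_inter_add_sdiff _ hs, piecewise_preimage, ite_inter_self, ite_sdiff_self]

lemma withDensity_preimage_inter (h : ℝ → ℝ≥0∞) {f g : ℝ → ℝ} (hf : Measurable f) {c d : ℝ}
    (hc : c ≠ 0) (hg : ∀ y, g y = c * y + d) (hfg : ∀ y, f (g y) = y) {s B : Set ℝ}
    (hs : MeasurableSet s) (hB : MeasurableSet B) :
    volume.withDensity h (f ⁻¹' B ∩ s) = ENNReal.ofReal |c| * ∫⁻ y in B, s.indicator h (g y) := by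
  have hmeas : MeasurableSet (f ⁻¹' B ∩ s) := (hf hB).inter hs
  have hind : (B.indicator fun y => s.indicator h (g y)) =
      fun y => (f ⁻¹' B ∩ s).indicator h (c * y + d) := by
    ext y
    rw [← hg, ← indicator_indicator]
    by_cases hy : y ∈ B
    · rw [indicator_of_mem hy, indicator_of_mem (s := f ⁻¹' B) (by rwa [mem_preimage, hfg])]
    · rw [indicator_of_notMem hy,
        indicator_of_notMem (s := f ⁻¹' B) (by rwa [mem_preimage, hfg])]
  rw [← lintegral_indicator hB, hind, lintegral_comp_mul_add _ hc, ← mul_assoc,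
    ← ENNReal.ofReal_mul (abs_nonneg _), ← abs_mul, mul_inv_cancel₀ hc, abs_one,
    ENNReal.ofReal_one, one_mul, withDensity_apply _ hmeas, lintegral_indicator hmeas]

lemma ENNReal.two_sub_one : (2:ℝ≥0∞) - 1 = 1 :=
  ENNReal.sub_eq_of_eq_add_rev ENNReal.one_ne_top one_add_one_eq_two.symm

lemma one_div_two_pow_succ_le_half (k : ℕ) : (1:ℝ) / 2 ^ (k + 1) ≤ 1 / 2 :=
  one_div_le_one_div_of_le two_pos (le_self_pow₀ one_le_two k.succ_ne_zero)

lemma Im_subset_Ioo (k : ℕ) : Im k ⊆ Ioo 0 (1/2) := fun _ hx =>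
  ⟨lt_trans (by positivity) hx.1, hx.2.trans_le (one_div_two_pow_succ_le_half k)⟩

lemma Ip_subset_Ioo (k : ℕ) : Ip k ⊆ Ioo (1/2) 1 := fun _ hx =>
  ⟨by linarith [hx.1, one_div_two_pow_succ_le_half k],
    hx.2.trans (sub_lt_self _ (by positivity))⟩

lemma Im_zero : Im 0 = Ioo (1/4) (1/2) := by norm_num [Im]

lemma Ip_zero : Ip 0 = Ioo (1/2) (3/4) := by norm_num [Ip]

lemma half_mem_Im_succ_iff {x : ℝ} {k : ℕ} : x / 2 ∈ Im (k + 1) ↔ x ∈ Im k := by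
  have e₁ : (1:ℝ) / 2 ^ (k + 1 + 1) = 1 / 2 ^ (k + 1) / 2 := by ring
  have e₂ : (1:ℝ) / 2 ^ (k + 1 + 2) = 1 / 2 ^ (k + 2) / 2 := by ring
  simp only [Im, mem_Ioo]
  constructor <;> rintro ⟨h₁, h₂⟩ <;> constructor <;> linarith

lemma add_one_div_two_mem_Ip_succ_iff {x : ℝ} {k : ℕ} :
    (x + 1) / 2 ∈ Ip (k + 1) ↔ x ∈ Ip k := by
  have e₁ : (1:ℝ) / 2 ^ (k + 1 + 1) = 1 / 2 ^ (k + 1) / 2 := by ring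
  have e₂ : (1:ℝ) / 2 ^ (k + 1 + 2) = 1 / 2 ^ (k + 2) / 2 := by ring
  simp only [Ip, mem_Ioo]
  constructor <;> rintro ⟨h₁, h₂⟩ <;> constructor <;> linarith

lemma disjoint_Im_Ip (j k : ℕ) : Disjoint (Im j) (Ip k) :=
  ((Ioc_disjoint_Ioc_of_le le_rfl).mono Ioo_subset_Ioc_self Ioo_subset_Ioc_self).mono
    (Im_subset_Ioo j) (Ip_subset_Ioo k)

lemma pairwise_disjoint_Im_union_Ip : Pairwise (Disjoint on fun k => Im k ∪ Ip k) := by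
  intro j k hjk
  have hIm : Disjoint (Im j) (Im k) :=
    (show Antitone fun k : ℕ => (1:ℝ) / 2 ^ (k + 1) from fun _ _ h => by
      dsimp only; gcongr; norm_num).pairwise_disjoint_on_Ioo_succ hjk
  have hIp : Disjoint (Ip j) (Ip k) :=
    (show Monotone fun k : ℕ => 1 - (1:ℝ) / 2 ^ (k + 1) from fun _ _ h => by
      dsimp only; gcongr; norm_num).pairwise_disjoint_on_Ioo_succ hjk
  exact (hIm.union_right (disjoint_Im_Ip j k)).union_left
    ((disjoint_Im_Ip k j).symm.union_right hIp)

lemma measurableSet_Im_union_Ip (k : ℕ) : MeasurableSet (Im k ∪ Ip k) :=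
  measurableSet_Ioo.union measurableSet_Ioo

lemma volume_Im_union_Ip (k : ℕ) : volume (Im k ∪ Ip k) = ENNReal.ofReal (1 / 2 / 2 ^ k) := by
  have hlen : (1:ℝ) / 2 ^ (k + 1) - 1 / 2 ^ (k + 2) = 1 / 2 / 2 ^ k / 2 := by ring
  rw [measure_union (disjoint_Im_Ip k k) measurableSet_Ioo, Im, Ip, Real.volume_Ioo,
    Real.volume_Ioo, sub_sub_sub_cancel_left, hlen, ← ENNReal.ofReal_add (by positivity)
    (by positivity), add_halves]

lemma volume_iUnion_Im_union_Ip : volume (⋃ k, Im k ∪ Ip k) = 1 := by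
  rw [measure_iUnion pairwise_disjoint_Im_union_Ip measurableSet_Im_union_Ip]
  simp_rw [volume_Im_union_Ip]
  rw [← ENNReal.ofReal_tsum_of_nonneg (fun k => by positivity) (summable_geometric_two' 1),
    tsum_geometric_two', ENNReal.ofReal_one]

lemma ae_mem_iUnion_Im_union_Ip :
    ∀ᵐ x, x ∈ Icc (0:ℝ) 1 → x ∈ ⋃ k, Im k ∪ Ip k := by
  have hsub : ⋃ k, Im k ∪ Ip k ⊆ Icc (0:ℝ) 1 := iUnion_subset fun k =>
    union_subset ((Im_subset_Ioo k).trans (Ioo_subset_Icc_self.trans (Icc_subset_Icc_right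
      (by norm_num)))) ((Ip_subset_Ioo k).trans (Ioo_subset_Icc_self.trans
        (Icc_subset_Icc_left (by norm_num))))
  have hae := ae_eq_of_subset_of_measure_ge hsub
    (by rw [volume_iUnion_Im_union_Ip, Real.volume_Icc]; norm_num)
    (MeasurableSet.iUnion measurableSet_Im_union_Ip).nullMeasurableSet (by simp)
  filter_upwards [hae] with x hx
  exact hx.mpr

lemma hataDensity_eq_of_mem {x : ℝ} {k : ℕ} (hx : x ∈ Im k ∪ Ip k) :
    hataDensity x = 2 ^ (k + 1) - 1 := by
  rw [hataDensity, tsum_eq_single k fun j hj => by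
    rw [indicator_of_notMem ((pairwise_disjoint_Im_union_Ip hj).notMem_of_mem_right hx),
      mul_zero], indicator_of_mem hx, mul_one]

lemma measurable_hataDensity : Measurable hataDensity :=
  Measurable.tsum fun k =>
    (measurable_const.indicator (measurableSet_Im_union_Ip k)).const_mul _

section Transfer

variable {h : ℝ → ℝ≥0∞}

lemma tau1_eq_piecewise : tau1 = (Iio (1/2)).piecewise (· / 2) (2 * · - 1) := rfl

lemma tau2_eq_piecewise : tau2 = (Iio (1/2)).piecewise (2 * ·) (fun x => (x + 1) / 2) := rfl

def tau1Transfer (h : ℝ → ℝ≥0∞) (y : ℝ) : ℝ≥0∞ :=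
  2 * (Iio (1/2)).indicator h (2 * y) + 2⁻¹ * (Ici (1/2)).indicator h ((y + 1) / 2)

def tau2Transfer (h : ℝ → ℝ≥0∞) (y : ℝ) : ℝ≥0∞ :=
  2⁻¹ * (Iio (1/2)).indicator h (y / 2) + 2 * (Ici (1/2)).indicator h (2 * y - 1)

def hataTransfer (h : ℝ → ℝ≥0∞) (y : ℝ) : ℝ≥0∞ :=
  1/2 * tau1Transfer h y + 1/2 * tau2Transfer h y

lemma withDensity_preimage_tau1 (hh : Measurable h) {B : Set ℝ} (hB : MeasurableSet B) :
    volume.withDensity h (tau1 ⁻¹' B) = ∫⁻ y in B, tau1Transfer h y := by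
  rw [tau1_eq_piecewise, measure_piecewise_preimage _ measurableSet_Iio, sdiff_eq, compl_Iio,
    withDensity_preimage_inter h (by fun_prop) two_ne_zero (d := 0) (g := (2 * ·))
      (fun _ => by ring) (fun _ => by ring) measurableSet_Iio hB,
    withDensity_preimage_inter h (by fun_prop) one_half_pos.ne' (d := 1/2)
      (g := fun y => (y + 1) / 2) (fun _ => by ring) (fun _ => by ring) measurableSet_Ici hB,
    show ENNReal.ofReal |2| = 2 by simp, show ENNReal.ofReal |1/2| = 2⁻¹ by simp,
    ← lintegral_const_mul' _ _ (by simp), ← lintegral_const_mul' _ _ (by simp),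
    ← lintegral_add_left (by measurability)]
  rfl

lemma withDensity_preimage_tau2 (hh : Measurable h) {B : Set ℝ} (hB : MeasurableSet B) :
    volume.withDensity h (tau2 ⁻¹' B) = ∫⁻ y in B, tau2Transfer h y := by
  rw [tau2_eq_piecewise, measure_piecewise_preimage _ measurableSet_Iio, sdiff_eq, compl_Iio,
    withDensity_preimage_inter h (by fun_prop) one_half_pos.ne' (d := 0) (g := (· / 2))
      (fun _ => by ring) (fun _ => by ring) measurableSet_Iio hB,
    withDensity_preimage_inter h (by fun_prop) two_ne_zero (d := -1) (g := (2 * · - 1))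
      (fun _ => by ring) (fun _ => by ring) measurableSet_Ici hB,
    show ENNReal.ofReal |2| = 2 by simp, show ENNReal.ofReal |1/2| = 2⁻¹ by simp,
    ← lintegral_const_mul' _ _ (by simp), ← lintegral_const_mul' _ _ (by simp),
    ← lintegral_add_left (by measurability)]
  rfl

lemma measurable_tau1Transfer (hh : Measurable h) : Measurable (tau1Transfer h) := by
  unfold tau1Transfer; measurability

lemma withDensity_preimage_hata (hh : Measurable h) {B : Set ℝ} (hB : MeasurableSet B) :
    1/2 * volume.withDensity h (tau1 ⁻¹' B) + 1/2 * volume.withDensity h (tau2 ⁻¹' B) =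
      ∫⁻ y in B, hataTransfer h y := by
  rw [withDensity_preimage_tau1 hh hB, withDensity_preimage_tau2 hh hB,
    ← lintegral_const_mul' _ _ (by simp), ← lintegral_const_mul' _ _ (by simp),
    ← lintegral_add_left ((measurable_tau1Transfer hh).const_mul _)]
  rfl

end Transfer

lemma indicator_Iio_hataDensity_two_mul {x : ℝ} {k : ℕ} (hx : x ∈ Im k) :
    (Iio (1/2)).indicator hataDensity (2 * x) = 2 ^ k - 1 := by
  cases k with
  | zero =>
    rw [Im_zero] at hx
    rw [indicator_of_notMem (by rw [mem_Iio]; linarith [hx.1]), pow_zero, tsub_self]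
  | succ k =>
    have h2x : 2 * x ∈ Im k :=
      half_mem_Im_succ_iff.1 (by rwa [mul_div_cancel_left₀ _ two_ne_zero])
    rw [indicator_of_mem (mem_Iio.2 (Im_subset_Ioo k h2x).2), hataDensity_eq_of_mem (.inl h2x)]

lemma indicator_Ici_hataDensity_two_mul_sub_one {x : ℝ} {k : ℕ} (hx : x ∈ Ip k) :
    (Ici (1/2)).indicator hataDensity (2 * x - 1) = 2 ^ k - 1 := by
  cases k with
  | zero =>
    rw [Ip_zero] at hx
    rw [indicator_of_notMem (by rw [mem_Ici]; linarith [hx.2]), pow_zero, tsub_self]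
  | succ k =>
    have h2x : 2 * x - 1 ∈ Ip k :=
      add_one_div_two_mem_Ip_succ_iff.1
        (by rwa [sub_add_cancel, mul_div_cancel_left₀ _ two_ne_zero])
    rw [indicator_of_mem (mem_Ici.2 (Ip_subset_Ioo k h2x).1.le),
      hataDensity_eq_of_mem (.inr h2x)]

lemma hata_weight_identity (k : ℕ) :
    (1/2 : ℝ≥0∞) * (2 * (2 ^ k - 1) + 2⁻¹ * 1) + 1/2 * (2⁻¹ * (2 ^ (k + 2) - 1) + 2 * 0) =
      2 ^ (k + 1) - 1 := by
  obtain ⟨a, ha⟩ : ∃ a : ℝ≥0, (2:ℝ≥0∞) ^ k = a + 1 := ⟨2 ^ k - 1, by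
    rw [ENNReal.coe_sub, ENNReal.coe_pow, ENNReal.coe_one, ENNReal.coe_ofNat,
      tsub_add_cancel_of_le (one_le_pow₀ one_le_two)]⟩
  have h₁ : (2:ℝ≥0∞) ^ (k + 1) = ((2 * a + 1 : ℝ≥0) : ℝ≥0∞) + 1 := by
    rw [pow_succ, ha]; push_cast; ring
  have h₂ : (2:ℝ≥0∞) ^ (k + 2) = ((4 * a + 3 : ℝ≥0) : ℝ≥0∞) + 1 := by
    rw [pow_add, ha]; push_cast; ring
  simp only [ha, h₁, h₂, ENNReal.add_sub_cancel_right ENNReal.one_ne_top, one_div,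
    ← ENNReal.coe_inv_two]
  norm_cast
  ring

lemma hataTransfer_hataDensity_of_mem_Im {x : ℝ} {k : ℕ} (hx : x ∈ Im k) :
    hataTransfer hataDensity x = hataDensity x := by
  obtain ⟨hx₀, hx₁⟩ := Im_subset_Ioo k hx
  have hright : (x + 1) / 2 ∈ Ip 0 := by rw [Ip_zero]; constructor <;> linarith
  have hhalf : x / 2 ∈ Im (k + 1) := half_mem_Im_succ_iff.2 hx
  have hright_val : (Ici (1/2)).indicator hataDensity ((x + 1) / 2) = 1 := by
    rw [indicator_of_mem (mem_Ici.2 (Ip_subset_Ioo 0 hright).1.le),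
      hataDensity_eq_of_mem (.inr hright), zero_add, pow_one, ENNReal.two_sub_one]
  rw [hataTransfer, tau1Transfer, tau2Transfer, indicator_Iio_hataDensity_two_mul hx, hright_val,
    indicator_of_mem (mem_Iio.2 (Im_subset_Ioo _ hhalf).2), hataDensity_eq_of_mem (.inl hhalf),
    indicator_of_notMem (by rw [mem_Ici]; linarith), hataDensity_eq_of_mem (.inl hx)]
  exact hata_weight_identity k

lemma hataTransfer_hataDensity_of_mem_Ip {x : ℝ} {k : ℕ} (hx : x ∈ Ip k) :
    hataTransfer hataDensity x = hataDensity x := by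
  obtain ⟨hx₀, hx₁⟩ := Ip_subset_Ioo k hx
  have hhalf : x / 2 ∈ Im 0 := by rw [Im_zero]; constructor <;> linarith
  have hright : (x + 1) / 2 ∈ Ip (k + 1) := add_one_div_two_mem_Ip_succ_iff.2 hx
  have hhalf_val : (Iio (1/2)).indicator hataDensity (x / 2) = 1 := by
    rw [indicator_of_mem (mem_Iio.2 (Im_subset_Ioo 0 hhalf).2),
      hataDensity_eq_of_mem (.inl hhalf), zero_add, pow_one, ENNReal.two_sub_one]
  rw [hataTransfer, tau1Transfer, tau2Transfer, indicator_of_notMem (by rw [mem_Iio]; linarith),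
    indicator_of_mem (mem_Ici.2 (Ip_subset_Ioo _ hright).1.le),
    hataDensity_eq_of_mem (.inr hright), hhalf_val, indicator_Ici_hataDensity_two_mul_sub_one hx,
    hataDensity_eq_of_mem (.inr hx), ← hata_weight_identity k]
  ring

/-- For the Hata random map with probabilities `(1/2,1/2)`, the measure `μ` is invariant:
for every Borel set `B ⊆ [0,1]`, `(1/2)·μ(τ₁⁻¹ B) + (1/2)·μ(τ₂⁻¹ B) = μ(B)`. -/
theorem hata_invariant (B : Set ℝ) (hB : MeasurableSet B) (hB1 : B ⊆ Set.Icc 0 1) :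
    (1/2 : ℝ≥0∞) * muH (tau1 ⁻¹' B) + (1/2 : ℝ≥0∞) * muH (tau2 ⁻¹' B) = muH B := by
  have hfix : ∀ᵐ x, x ∈ B → hataTransfer hataDensity x = hataDensity x := by
    filter_upwards [ae_mem_iUnion_Im_union_Ip] with x hx hxB
    obtain ⟨k, hk | hk⟩ := mem_iUnion.1 (hx (hB1 hxB))
    · exact hataTransfer_hataDensity_of_mem_Im hk
    · exact hataTransfer_hataDensity_of_mem_Ip hk
  rw [muH, withDensity_preimage_hata measurable_hataDensity hB, withDensity_apply _ hB]
  exact setLIntegral_congr_fun_ae hB hfix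

end
end

section
/- Let (X,B,λ) be a σ-finite standard Borel measure space, T : X → X measurable and nonsingular with respect to λ, α a countable Markov partition for (X,λ,T), and μ a σ-finite measure equivalent to λ with 0 < μ(s) < ∞ for all s ∈ α. Then the identity μ∘φ⁻¹ = ν_μ holds if and only if for every s ∈ α and every bounded measurable g : X → ℝ one has ∫_X 1_s·(g∘T) dμ = ∫_X (Σ_{t∈α} (μ(s)p(s,t)/μ(t))·1_t)·g dμ (i.e. the Perron–Frobenius operator of T with respect to μ sends 1_s to Σ_t (μ(s)p(s,t)/μ(t))·1_t). Moreover, in that case μ is T-invariant if and only if ν_μ is invariant under the left shift on α^{ℕ}. -/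
/-!
Everything is transported to the path space `ℕ → ι` by the coding map `φ`. There
`φ ∘ T = σ ∘ φ` a.e. (`σ` the left shift), and by (M1) every Borel set is `λ`-a.e. a
`φ`-preimage, so measures absolutely continuous with respect to `λ` are determined by their
images under `φ`. The Perron–Frobenius identity for `1_s` says that the measures
`g ↦ ∫ 1_s · g ∘ T dμ` and `(∑_t c(s,t) 1_t) · μ` agree, where `c(s,t) = μ(s)p(s,t)/μ(t)`;
pushed to path space, it says that `σ` maps `P = μ ∘ φ⁻¹` restricted to `[s]` to the measure
with density `ω ↦ c(s, ω₀)` with respect to `P`. On a cylinder `[w₀ … wₙ]` this reads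
`P[s w₀ … wₙ] = μ(s)p(s,w₀)/μ(w₀) · P[w₀ … wₙ]`, the recursion characterising the Markov
measure `ν`. Finally `(μ ∘ T⁻¹) ∘ φ⁻¹ = P ∘ σ⁻¹`, so `μ` is `T`-invariant iff `P` is
`σ`-invariant.
-/

open MeasureTheory Set
open scoped ENNReal

noncomputable section

namespace MeasureTheory.Measure

variable {X Y : Type*} [MeasurableSpace X] [MeasurableSpace Y]

theorem exists_ae_eq_preimage_of_measurableSet_generateFrom {lam : Measure X} {φ : X → Y}
    {S : Set (Set X)} (hS : ∀ t ∈ S, ∃ A, MeasurableSet A ∧ t =ᵐ[lam] φ ⁻¹' A) {B : Set X}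
    (hB : MeasurableSet[MeasurableSpace.generateFrom S] B) :
    ∃ A, MeasurableSet A ∧ B =ᵐ[lam] φ ⁻¹' A := by
  induction B, hB using MeasurableSpace.generateFrom_induction with
  | hC t ht => exact hS t ht
  | empty => exact ⟨∅, .empty, by simp⟩
  | compl t _ ih =>
    obtain ⟨A, hA, htA⟩ := ih
    exact ⟨Aᶜ, hA.compl, htA.compl⟩
  | iUnion t _ ih =>
    choose A hA htA using ih
    refine ⟨⋃ n, A n, .iUnion hA, ?_⟩
    rw [preimage_iUnion]
    exact Filter.EventuallyEq.countable_iUnion htA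

theorem map_eq_map_iff_of_ae_eq_preimage {lam ρ₁ ρ₂ : Measure X} {φ : X → Y}
    (hφ : Measurable φ) (hgen : ∀ B, MeasurableSet B → ∃ A, MeasurableSet A ∧ B =ᵐ[lam] φ ⁻¹' A)
    (h₁ : ρ₁ ≪ lam) (h₂ : ρ₂ ≪ lam) : ρ₁.map φ = ρ₂.map φ ↔ ρ₁ = ρ₂ := by
  refine ⟨fun h => ?_, fun h => h ▸ rfl⟩
  ext B hB
  obtain ⟨A, hA, hBA⟩ := hgen B hB
  rw [measure_congr (h₁.ae_eq hBA), measure_congr (h₂.ae_eq hBA), ← map_apply hφ hA, h,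
    map_apply hφ hA]

theorem map_withDensity_comp {μ : Measure X} {φ : X → Y} (hφ : Measurable φ) {f : Y → ℝ≥0∞}
    (hf : Measurable f) : (μ.withDensity (f ∘ φ)).map φ = (μ.map φ).withDensity f := by
  ext B hB
  rw [map_apply hφ hB, withDensity_apply _ (hφ hB), withDensity_apply _ hB,
    setLIntegral_map hB hf hφ, Function.comp_def]

theorem ext_of_forall_integral_eq_of_bounded {ρ₁ ρ₂ : Measure X} [IsFiniteMeasure ρ₁]
    [IsFiniteMeasure ρ₂]
    (h : ∀ g : X → ℝ, Measurable g → (∃ C, ∀ x, |g x| ≤ C) → ∫ x, g x ∂ρ₁ = ∫ x, g x ∂ρ₂) :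
    ρ₁ = ρ₂ := by
  ext B hB
  have hind := h (B.indicator 1) (measurable_one.indicator hB)
    ⟨1, fun x => by by_cases hx : x ∈ B <;> simp [hx]⟩
  rw [integral_indicator_one hB, integral_indicator_one hB] at hind
  exact (ENNReal.toReal_eq_toReal_iff' (measure_ne_top _ _) (measure_ne_top _ _)).mp hind

end MeasureTheory.Measure

section PathSpace

variable {ι : Type*}

def prefixCylinder (w : ℕ → ι) (n : ℕ) : Set (ℕ → ι) := {ω | ∀ k ≤ n, ω k = w k}

def prefixCylinders : Set (Set (ℕ → ι)) := {A | ∃ w n, A = prefixCylinder w n}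

def leftShift (ω : ℕ → ι) : ℕ → ι := fun n => ω (n + 1)

theorem prefixCylinder_zero (w : ℕ → ι) : prefixCylinder w 0 = {ω | ω 0 = w 0} := by
  simp [prefixCylinder]

theorem prefixCylinder_succ (w : ℕ → ι) (n : ℕ) :
    prefixCylinder w (n + 1) = {ω | ω 0 = w 0} ∩ leftShift ⁻¹' prefixCylinder (leftShift w) n := by
  ext ω
  simp only [prefixCylinder, leftShift, mem_ofPred_eq, mem_inter_iff, mem_preimage]
  constructor
  · intro h
    exact ⟨h 0 (Nat.zero_le _), fun k hk => h (k + 1) (by omega)⟩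
  · rintro ⟨h0, h⟩ (_ | k) hk
    exacts [h0, h k (by omega)]

theorem prefixCylinder_subset_prefixCylinder {w v : ℕ → ι} {m n : ℕ} (hmn : m ≤ n)
    (hwv : ∀ k ≤ m, w k = v k) : prefixCylinder v n ⊆ prefixCylinder w m :=
  fun _ hω k hk => (hω k (hk.trans hmn)).trans (hwv k hk).symm

theorem isPiSystem_prefixCylinders : IsPiSystem (prefixCylinders (ι := ι)) := by
  rintro _ ⟨w, m, rfl⟩ _ ⟨v, n, rfl⟩ ⟨_, hωw, hωv⟩
  have hwv : ∀ k ≤ min m n, w k = v k := fun k hk =>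
    (hωw k (hk.trans (min_le_left _ _))).symm.trans (hωv k (hk.trans (min_le_right _ _)))
  rcases le_total m n with hmn | hnm
  · refine ⟨v, n, inter_eq_right.mpr (prefixCylinder_subset_prefixCylinder hmn ?_)⟩
    simpa [min_eq_left hmn] using hwv
  · refine ⟨w, m, inter_eq_left.mpr (prefixCylinder_subset_prefixCylinder hnm ?_)⟩
    intro k hk
    exact (hwv k (by omega)).symm

variable [MeasurableSpace ι]

theorem measurable_leftShift : Measurable (leftShift (ι := ι)) :=
  measurable_pi_lambda _ fun n => measurable_pi_apply (n + 1)

variable [MeasurableSingletonClass ι]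

theorem measurableSet_prefixCylinder (w : ℕ → ι) (n : ℕ) :
    MeasurableSet (prefixCylinder w n) := by
  simp only [prefixCylinder, ofPred_forall]
  exact .iInter fun k => .iInter fun _ =>
    (measurableSet_singleton (w k)).preimage (measurable_pi_apply k)

theorem measurableSet_eval_eq (n : ℕ) (i : ι) : MeasurableSet {ω : ℕ → ι | ω n = i} :=
  (measurableSet_singleton i).preimage (measurable_pi_apply n)

variable [Countable ι]

theorem generateFrom_prefixCylinders :
    MeasurableSpace.generateFrom prefixCylinders = (inferInstance : MeasurableSpace (ℕ → ι)) := by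
  refine le_antisymm (MeasurableSpace.generateFrom_le ?_) ?_
  · rintro _ ⟨w, n, rfl⟩
    exact measurableSet_prefixCylinder w n
  · refine iSup_le fun n => Measurable.comap_le ?_
    -- each coordinate factors through the countably-valued restriction to `{0, …, n}`
    have hrestr : Measurable[MeasurableSpace.generateFrom prefixCylinders]
        (fun (ω : ℕ → ι) (k : Fin (n + 1)) => ω k) := by
      refine @measurable_to_countable' _ _ _ _ (_) _ fun v =>
        MeasurableSpace.measurableSet_generateFrom
        ⟨fun k => if h : k < n + 1 then v ⟨k, h⟩ else v 0, n, ?_⟩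
      ext ω
      simp only [mem_preimage, mem_singleton_iff, prefixCylinder, mem_ofPred_eq, funext_iff,
        Fin.forall_iff]
      exact ⟨fun h k hk => by simp [← h k (by omega), Nat.lt_succ_of_le hk],
        fun h k hk => by simp [h k (by omega), hk]⟩
    exact (measurable_pi_apply (Fin.last n)).comp hrestr

theorem measurable_comp_eval_zero {β : Type*} [MeasurableSpace β] (f : ι → β) :
    Measurable fun ω : ℕ → ι => f (ω 0) :=
  (measurable_of_countable f).comp (measurable_pi_apply 0)

theorem MeasureTheory.Measure.ext_of_prefixCylinder {ρ₁ ρ₂ : Measure (ℕ → ι)}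
    (hfin : ∀ i, ρ₁ {ω | ω 0 = i} ≠ ∞)
    (h : ∀ w n, ρ₁ (prefixCylinder w n) = ρ₂ (prefixCylinder w n)) : ρ₁ = ρ₂ := by
  refine Measure.ext_of_generateFrom_of_cover_subset generateFrom_prefixCylinders.symm
    isPiSystem_prefixCylinders (T := range fun i => {ω | ω 0 = i}) ?_ (countable_range _) ?_ ?_ ?_
  · rintro _ ⟨i, rfl⟩
    exact ⟨fun _ => i, 0, (prefixCylinder_zero (fun _ => i)).symm⟩
  · exact sUnion_eq_univ_iff.mpr fun ω => ⟨_, mem_range_self (ω 0), rfl⟩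
  · rintro _ ⟨i, rfl⟩
    exact hfin i
  · rintro _ ⟨w, n, rfl⟩
    exact h w n

end PathSpace

section Markov

variable {ι : Type*}

def pfWeight (m : ι → ℝ≥0∞) (p : ι → ι → ℝ≥0∞) (i j : ι) : ℝ≥0∞ := m i * p i j / m j

theorem pfWeight_mul {m : ι → ℝ≥0∞} (p : ι → ι → ℝ≥0∞) (i : ι) {j : ι} (hj0 : m j ≠ 0)
    (hjtop : m j ≠ ∞) : pfWeight m p i j * m j = m i * p i j :=
  ENNReal.div_mul_cancel hj0 hjtop

variable [MeasurableSpace ι]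

def IsMarkovWith (P : Measure (ℕ → ι)) (m : ι → ℝ≥0∞) (p : ι → ι → ℝ≥0∞) : Prop :=
  ∀ n w, P (prefixCylinder w n) = m (w 0) * ∏ k ∈ Finset.range n, p (w k) (w (k + 1))

variable [MeasurableSingletonClass ι]

theorem map_leftShift_restrict_apply_prefixCylinder (P : Measure (ℕ → ι)) (w : ℕ → ι) (n : ℕ) :
    (P.restrict {ω | ω 0 = w 0}).map leftShift (prefixCylinder (leftShift w) n)
      = P (prefixCylinder w (n + 1)) := by
  rw [Measure.map_apply measurable_leftShift (measurableSet_prefixCylinder _ n),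
    Measure.restrict_apply (measurable_leftShift (measurableSet_prefixCylinder _ n)),
    prefixCylinder_succ, inter_comm]

theorem withDensity_apply_prefixCylinder (P : Measure (ℕ → ι)) (f : ι → ℝ≥0∞) (w : ℕ → ι)
    (n : ℕ) : P.withDensity (fun ω => f (ω 0)) (prefixCylinder w n)
      = f (w 0) * P (prefixCylinder w n) := by
  rw [withDensity_apply _ (measurableSet_prefixCylinder w n),
    setLIntegral_congr_fun (measurableSet_prefixCylinder w n)
      fun ω hω => by rw [hω 0 (Nat.zero_le n)],
    setLIntegral_const]

variable [Countable ι]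

theorem IsMarkovWith.eq {P Q : Measure (ℕ → ι)} {m : ι → ℝ≥0∞} {p : ι → ι → ℝ≥0∞}
    (hP : IsMarkovWith P m p) (hQ : IsMarkovWith Q m p) (hm : ∀ i, m i ≠ ∞) : P = Q :=
  Measure.ext_of_prefixCylinder
    (fun i => by rw [← prefixCylinder_zero (fun _ => i), hP]; simpa using hm i)
    fun w n => (hP n w).trans (hQ n w).symm

theorem lintegral_pfWeight_le {P : Measure (ℕ → ι)} {m : ι → ℝ≥0∞} {p : ι → ι → ℝ≥0∞}
    (hm0 : ∀ i, m i ≠ 0) (hmtop : ∀ i, m i ≠ ∞) (hP : ∀ i, P {ω | ω 0 = i} = m i)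
    (hp : ∀ i, ∑' j, p i j ≤ 1) (i : ι) : ∫⁻ ω, pfWeight m p i (ω 0) ∂P ≤ m i :=
  calc ∫⁻ ω, pfWeight m p i (ω 0) ∂P = ∑' j, pfWeight m p i j * m j := by
        rw [← lintegral_map (measurable_of_countable _) (measurable_pi_apply 0),
          lintegral_countable']
        refine tsum_congr fun j => ?_
        rw [Measure.map_apply (measurable_pi_apply 0) (measurableSet_singleton j), ← hP j]
        rfl
    _ = m i * ∑' j, p i j := by
        simp_rw [pfWeight_mul p i (hm0 _) (hmtop _), ENNReal.tsum_mul_left]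
    _ ≤ m i := mul_le_of_le_one_right' (hp i)

theorem isMarkovWith_iff_map_leftShift_restrict {P : Measure (ℕ → ι)} {m : ι → ℝ≥0∞}
    {p : ι → ι → ℝ≥0∞} (hm0 : ∀ i, m i ≠ 0) (hmtop : ∀ i, m i ≠ ∞)
    (hP : ∀ i, P {ω | ω 0 = i} = m i) :
    IsMarkovWith P m p ↔ ∀ i, (P.restrict {ω | ω 0 = i}).map leftShift
      = P.withDensity (fun ω => pfWeight m p i (ω 0)) := by
  constructor
  · intro hmarkov i
    refine Measure.ext_of_prefixCylinder (fun j => ?_) fun w n => ?_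
    · rw [Measure.map_apply measurable_leftShift (measurableSet_eval_eq 0 j)]
      refine ne_top_of_le_ne_top (hmtop i) ?_
      exact (measure_mono (subset_univ _)).trans_eq (by rw [Measure.restrict_apply_univ, hP i])
    · set v : ℕ → ι := fun k => Nat.casesOn k i w
      rw [show w = leftShift v from rfl, show i = v 0 from rfl,
        map_leftShift_restrict_apply_prefixCylinder, withDensity_apply_prefixCylinder,
        hmarkov, hmarkov, Finset.prod_range_succ', ← mul_assoc (pfWeight m p _ _),
        pfWeight_mul p _ (hm0 _) (hmtop _)]
      simp only [leftShift]
      ring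
  · intro hPF n
    induction n with
    | zero => intro w; simpa [← prefixCylinder_zero] using hP (w 0)
    | succ n ih =>
      intro w
      rw [← map_leftShift_restrict_apply_prefixCylinder, hPF, withDensity_apply_prefixCylinder,
        ih, Finset.prod_range_succ', ← mul_assoc (pfWeight m p _ _),
        pfWeight_mul p _ (hm0 _) (hmtop _)]
      simp only [leftShift]
      ring

end Markov

section PerronFrobenius

variable {X ι : Type*}

theorem tsum_mul_indicator_of_mem {s : ι → Set X} (hdisj : Pairwise (Function.onFun Disjoint s))
    {x : X} {k : ι} (hx : x ∈ s k) (c : ι → ℝ) :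
    ∑' j, c j * (s j).indicator (fun _ => (1 : ℝ)) x = c k := by
  rw [tsum_eq_single k fun j hj => by
    simp [indicator_of_notMem fun hxj => disjoint_left.mp (hdisj hj) hxj hx]]
  simp [hx]

variable [MeasurableSpace X]

theorem integral_indicator_mul_comp {μ : Measure X} {T : X → X} (hT : Measurable T) {A : Set X}
    (hA : MeasurableSet A) {g : X → ℝ} (hg : Measurable g) :
    ∫ x, A.indicator (fun _ => (1 : ℝ)) x * g (T x) ∂μ = ∫ y, g y ∂(μ.restrict A).map T := by
  rw [integral_map hT.aemeasurable hg.aestronglyMeasurable, ← integral_indicator hA]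
  congr 1 with x
  by_cases hx : x ∈ A <;> simp [hx]

theorem map_restrict_eq_withDensity_iff {μ : Measure X} {T : X → X} (hT : Measurable T)
    {A : Set X} (hA : MeasurableSet A) (hμA : μ A ≠ ∞) {F : X → ℝ≥0∞} (hF : Measurable F)
    (hFfin : ∫⁻ x, F x ∂μ ≠ ∞) :
    (μ.restrict A).map T = μ.withDensity F ↔
      ∀ g : X → ℝ, Measurable g → (∃ C, ∀ x, |g x| ≤ C) →
        ∫ x, A.indicator (fun _ => (1 : ℝ)) x * g (T x) ∂μ = ∫ x, (F x).toReal * g x ∂μ := by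
  have : IsFiniteMeasure (μ.restrict A) := isFiniteMeasure_restrict.mpr hμA
  have : IsFiniteMeasure (μ.withDensity F) := isFiniteMeasure_withDensity hFfin
  have hdens (g : X → ℝ) : ∫ x, (F x).toReal * g x ∂μ = ∫ x, g x ∂μ.withDensity F :=
    (integral_withDensity_eq_integral_toReal_smul hF (ae_lt_top hF hFfin) g).symm
  refine ⟨fun h g hg _ => ?_, fun h => Measure.ext_of_forall_integral_eq_of_bounded
    fun g hg hgC => ?_⟩
  · rw [integral_indicator_mul_comp hT hA hg, h, hdens]
  · rw [← integral_indicator_mul_comp hT hA hg, h g hg hgC, hdens]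

end PerronFrobenius

section Coding

variable {X ι : Type*} [MeasurableSpace X]

theorem tsum_measure_inter_preimage_div_le_one [Countable ι] {lam : Measure X} {T : X → X}
    (hT : Measurable T) {s : ι → Set X} (hs : ∀ i, MeasurableSet (s i))
    (hdisj : Pairwise (Function.onFun Disjoint s)) (i : ι) :
    ∑' j, lam (s i ∩ T ⁻¹' s j) / lam (s i) ≤ 1 := by
  simp_rw [div_eq_mul_inv]
  rw [ENNReal.tsum_mul_right, ← div_eq_mul_inv,
    ← measure_iUnion (fun j k hjk => ((hdisj hjk).preimage T).mono inter_subset_right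
      inter_subset_right) fun j => (hs i).inter ((hs j).preimage hT)]
  exact ENNReal.div_le_of_le_mul (by rw [one_mul]; exact measure_mono (iUnion_subset
    fun _ => inter_subset_left))

variable {lam : Measure X} {T : X → X} {s : ι → Set X} {φ : X → ℕ → ι}

theorem preimage_iterate_ae_eq_coding_preimage (hdisj : Pairwise (Function.onFun Disjoint s))
    (hφ : ∀ᵐ x ∂lam, ∀ n, T^[n] x ∈ s (φ x n)) (n : ℕ) (i : ι) :
    T^[n] ⁻¹' s i =ᵐ[lam] φ ⁻¹' {ω | ω n = i} := by
  filter_upwards [hφ] with x hx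
  refine propext ⟨fun hxi => ?_, fun hφi => ?_⟩
  · by_contra hne
    exact disjoint_left.mp (hdisj hne) (hx n) hxi
  · exact (show φ x n = i from hφi) ▸ hx n

theorem coding_comp_ae_eq (hT : Measure.QuasiMeasurePreserving T lam lam)
    (hdisj : Pairwise (Function.onFun Disjoint s)) (hφ : ∀ᵐ x ∂lam, ∀ n, T^[n] x ∈ s (φ x n)) :
    φ ∘ T =ᵐ[lam] leftShift ∘ φ := by
  filter_upwards [hφ, hT.ae hφ] with x hx hTx
  funext n
  by_contra hne
  exact disjoint_left.mp (hdisj hne) (hTx n) (Function.iterate_succ_apply T n x ▸ hx (n + 1))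

variable [MeasurableSpace ι]

theorem map_eq_self_iff_map_leftShift_map_coding {μ : Measure X} (hμ : μ ≪ lam)
    (hT : Measure.QuasiMeasurePreserving T lam lam) (hφm : Measurable φ)
    (hdisj : Pairwise (Function.onFun Disjoint s)) (hφ : ∀ᵐ x ∂lam, ∀ n, T^[n] x ∈ s (φ x n))
    (hgen : ∀ B, MeasurableSet B → ∃ A, MeasurableSet A ∧ B =ᵐ[lam] φ ⁻¹' A) :
    μ.map T = μ ↔ (μ.map φ).map leftShift = μ.map φ := by
  rw [Measure.map_map measurable_leftShift hφm,
    ← Measure.map_congr (hμ.ae_eq (coding_comp_ae_eq hT hdisj hφ)),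
    ← Measure.map_map hφm hT.measurable]
  exact (Measure.map_eq_map_iff_of_ae_eq_preimage hφm hgen
    ((hμ.map hT.measurable).trans hT.absolutelyContinuous) hμ).symm

variable [MeasurableSingletonClass ι]

theorem exists_ae_eq_coding_preimage (hdisj : Pairwise (Function.onFun Disjoint s))
    (hφ : ∀ᵐ x ∂lam, ∀ n, T^[n] x ∈ s (φ x n))
    (hM1 : ∀ B : Set X, MeasurableSet B → ∃ B',
      MeasurableSet[MeasurableSpace.generateFrom {t | ∃ (i : ι) (n : ℕ), t = T^[n] ⁻¹' s i}] B' ∧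
      lam ((B \ B') ∪ (B' \ B)) = 0)
    {B : Set X} (hB : MeasurableSet B) : ∃ A, MeasurableSet A ∧ B =ᵐ[lam] φ ⁻¹' A := by
  obtain ⟨B', hB', hBB'⟩ := hM1 B hB
  obtain ⟨A, hA, hB'A⟩ := Measure.exists_ae_eq_preimage_of_measurableSet_generateFrom
    (by rintro _ ⟨i, n, rfl⟩; exact ⟨_, measurableSet_eval_eq n i,
      preimage_iterate_ae_eq_coding_preimage hdisj hφ n i⟩) hB'
  exact ⟨A, hA, (measure_symmDiff_eq_zero_iff.mp hBB').trans hB'A⟩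

theorem map_coding_map_restrict {μ : Measure X} (hμ : μ ≪ lam)
    (hT : Measure.QuasiMeasurePreserving T lam lam) (hφm : Measurable φ)
    (hdisj : Pairwise (Function.onFun Disjoint s)) (hφ : ∀ᵐ x ∂lam, ∀ n, T^[n] x ∈ s (φ x n))
    (i : ι) : ((μ.restrict (s i)).map T).map φ
      = ((μ.map φ).restrict {ω | ω 0 = i}).map leftShift := by
  have hsi : s i =ᵐ[μ] φ ⁻¹' {ω | ω 0 = i} :=
    hμ.ae_eq (preimage_iterate_ae_eq_coding_preimage hdisj hφ 0 i)
  rw [Measure.map_map hφm hT.measurable,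
    Measure.map_congr (ae_restrict_of_ae (hμ.ae_eq (coding_comp_ae_eq hT hdisj hφ))),
    ← Measure.map_map measurable_leftShift hφm, Measure.restrict_congr_set hsi,
    Measure.restrict_map hφm (measurableSet_eval_eq 0 i)]

theorem map_restrict_eq_withDensity_iff_map_coding [Countable ι] {μ : Measure X} (hμ : μ ≪ lam)
    (hT : Measure.QuasiMeasurePreserving T lam lam) (hφm : Measurable φ)
    (hdisj : Pairwise (Function.onFun Disjoint s)) (hφ : ∀ᵐ x ∂lam, ∀ n, T^[n] x ∈ s (φ x n))
    (hgen : ∀ B, MeasurableSet B → ∃ A, MeasurableSet A ∧ B =ᵐ[lam] φ ⁻¹' A)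
    (f : ι → ℝ≥0∞) (i : ι) :
    (μ.restrict (s i)).map T = μ.withDensity (fun x => f (φ x 0)) ↔
      ((μ.map φ).restrict {ω | ω 0 = i}).map leftShift
        = (μ.map φ).withDensity fun ω => f (ω 0) := by
  rw [← map_coding_map_restrict hμ hT hφm hdisj hφ,
    ← Measure.map_withDensity_comp hφm (measurable_comp_eval_zero f)]
  exact (Measure.map_eq_map_iff_of_ae_eq_preimage hφm hgen
    (((Measure.absolutelyContinuous_of_le Measure.restrict_le_self).trans hμ).map hT.measurable
      |>.trans hT.absolutelyContinuous) ((withDensity_absolutelyContinuous μ _).trans hμ)).symm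

theorem map_restrict_eq_withDensity_coding_iff [Countable ι] {μ : Measure X} (hT : Measurable T)
    {i : ι} (hs : MeasurableSet (s i)) (hμs : μ (s i) ≠ ∞)
    (hdisj : Pairwise (Function.onFun Disjoint s)) (hφm : Measurable φ)
    (hφ0 : ∀ᵐ x ∂μ, x ∈ s (φ x 0)) {c : ι → ℝ≥0∞} (hc : ∫⁻ x, c (φ x 0) ∂μ ≠ ∞) :
    (μ.restrict (s i)).map T = μ.withDensity (fun x => c (φ x 0)) ↔
      ∀ g : X → ℝ, Measurable g → (∃ C, ∀ x, |g x| ≤ C) →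
        ∫ x, (s i).indicator (fun _ => (1 : ℝ)) x * g (T x) ∂μ
          = ∫ x, (∑' j, (c j).toReal * (s j).indicator (fun _ => (1 : ℝ)) x) * g x ∂μ := by
  refine (map_restrict_eq_withDensity_iff hT hs hμs
    ((measurable_comp_eval_zero c).comp hφm) hc).trans
    (forall₂_congr fun g _ => imp_congr_right fun _ => ?_)
  refine iff_of_eq (congrArg _ (integral_congr_ae (hφ0.mono fun x hx => ?_)))
  exact congrArg (· * g x) (tsum_mul_indicator_of_mem hdisj hx fun j => (c j).toReal).symm

end Coding

theorem markov_coding_characterization_general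
    {X : Type*} [MeasurableSpace X]
    (lam : Measure X)
    (T : X → X) (hT : Measurable T) (hns : lam.map T ≪ lam)
    {ι : Type*} [Countable ι] [MeasurableSpace ι] [MeasurableSingletonClass ι]
    (s : ι → Set X) (hsm : ∀ i, MeasurableSet (s i))
    (hdisj : Pairwise (Function.onFun Disjoint s))
    -- transition probabilities
    (p : ι → ι → ℝ≥0∞) (hp : p = fun i j => lam (s i ∩ T ⁻¹' s j) / lam (s i))
    -- (M1): the σ-field generated by the pulled-back partition is everything mod `λ`
    (hM1 : ∀ A : Set X, MeasurableSet A → ∃ A',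
      MeasurableSet[MeasurableSpace.generateFrom
        {t : Set X | ∃ (i : ι) (n : ℕ), t = T^[n] ⁻¹' s i}] A' ∧
      lam ((A \ A') ∪ (A' \ A)) = 0)
    -- `μ` equivalent to `λ`, finite positive on partition elements
    (μ : Measure X) (hμlam : μ ≪ lam)
    (hμs : ∀ i, 0 < μ (s i) ∧ μ (s i) < ⊤)
    -- the coding map `φ`
    (φ : X → ℕ → ι) (hφm : Measurable φ)
    (hφ : ∀ᵐ x ∂lam, ∀ n : ℕ, T^[n] x ∈ s (φ x n))
    -- `ν` is the Markov measure on `α^ℕ` with initial distribution `μ` and transitions `p`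
    (ν : Measure (ℕ → ι))
    (hν : ∀ (n : ℕ) (w : ℕ → ι),
      ν {ω : ℕ → ι | ∀ k ≤ n, ω k = w k}
        = μ (s (w 0)) * ∏ k ∈ Finset.range n, p (w k) (w (k+1))) :
    (μ.map φ = ν ↔
      ∀ (i : ι) (g : X → ℝ), Measurable g → (∃ C : ℝ, ∀ x, |g x| ≤ C) →
        ∫ x, Set.indicator (s i) (fun _ => (1:ℝ)) x * g (T x) ∂μ
          = ∫ x, (∑' j : ι, (μ (s i) * p i j / μ (s j)).toReal
              * Set.indicator (s j) (fun _ => (1:ℝ)) x) * g x ∂μ)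
    ∧ (μ.map φ = ν →
        (μ.map T = μ ↔ ν.map (fun ω n => ω (n+1)) = ν)) := by
  have hq : Measure.QuasiMeasurePreserving T lam lam := ⟨hT, hns⟩
  have hm0 (i : ι) : μ (s i) ≠ 0 := (hμs i).1.ne'
  have hmtop (i : ι) : μ (s i) ≠ ∞ := (hμs i).2.ne
  have hgen (B : Set X) (hB : MeasurableSet B) := exists_ae_eq_coding_preimage hdisj hφ hM1 hB
  have hP (i : ι) : μ.map φ {ω | ω 0 = i} = μ (s i) := by
    rw [Measure.map_apply hφm (measurableSet_eval_eq 0 i)]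
    exact (measure_congr (hμlam.ae_eq (preimage_iterate_ae_eq_coding_preimage hdisj hφ 0 i))).symm
  have hp1 : ∀ i, ∑' j, p i j ≤ 1 := hp ▸ tsum_measure_inter_preimage_div_le_one hT hsm hdisj
  have hdens (i : ι) : ∫⁻ x, pfWeight (fun j => μ (s j)) p i (φ x 0) ∂μ ≠ ∞ := by
    rw [← lintegral_map (measurable_comp_eval_zero _) hφm]
    exact ne_top_of_le_ne_top (hmtop i) (lintegral_pfWeight_le hm0 hmtop hP hp1 i)
  refine ⟨?_, fun hmap => ?_⟩
  · calc μ.map φ = ν ↔ IsMarkovWith (μ.map φ) (fun i => μ (s i)) p :=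
          ⟨fun h => h ▸ hν, fun h => h.eq hν hmtop⟩
      _ ↔ ∀ i, ((μ.map φ).restrict {ω | ω 0 = i}).map leftShift
            = (μ.map φ).withDensity fun ω => pfWeight (fun j => μ (s j)) p i (ω 0) :=
          isMarkovWith_iff_map_leftShift_restrict hm0 hmtop hP
      _ ↔ ∀ i, (μ.restrict (s i)).map T
            = μ.withDensity fun x => pfWeight (fun j => μ (s j)) p i (φ x 0) :=
          forall_congr' fun i =>
            (map_restrict_eq_withDensity_iff_map_coding hμlam hq hφm hdisj hφ hgen _ i).symm
      _ ↔ _ := forall_congr' fun i => map_restrict_eq_withDensity_coding_iff hT (hsm i) (hmtop i)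
          hdisj hφm (hμlam.ae_le (hφ.mono fun x hx => hx 0)) (hdens i)
  · subst hmap
    exact map_eq_self_iff_map_leftShift_map_coding hμlam hq hφm hdisj hφ hgen

/-- Let `(X,B,λ)` be a σ-finite standard Borel measure space, `T` measurable and nonsingular,
`α = {s i}` a countable Markov partition (hypotheses `hM1`, `hM2`, `hM3`), `μ` a σ-finite
measure equivalent to `λ` with `0 < μ(s) < ∞` on the partition elements, `φ` the coding map
and `ν` the Markov measure with transition probabilities `p(s,t) = λ(s ∩ T⁻¹t)/λ(s)` and
initial distribution `μ(s)`.  Then `μ∘φ⁻¹ = ν` holds iff the Perron–Frobenius operator of `T`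
with respect to `μ` sends `1_s` to `∑_t (μ(s)p(s,t)/μ(t))·1_t`; moreover, in that case `μ` is
`T`-invariant iff `ν` is invariant under the left shift. -/
theorem markov_coding_characterization
    {X : Type*} [MeasurableSpace X] [StandardBorelSpace X]
    (lam : Measure X) [SigmaFinite lam]
    (T : X → X) (hT : Measurable T) (hns : lam.map T ≪ lam)
    {ι : Type*} [Countable ι] [MeasurableSpace ι] [MeasurableSingletonClass ι]
    (s : ι → Set X) (hsm : ∀ i, MeasurableSet (s i))
    (hdisj : Pairwise (Function.onFun Disjoint s))
    (hcover : lam ((⋃ i, s i)ᶜ) = 0)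
    (hpos : ∀ i, 0 < lam (s i)) (hfin : ∀ i, lam (s i) < ⊤)
    -- transition probabilities
    (p : ι → ι → ℝ≥0∞) (hp : p = fun i j => lam (s i ∩ T ⁻¹' s j) / lam (s i))
    -- (M1): the σ-field generated by the pulled-back partition is everything mod `λ`
    (hM1 : ∀ A : Set X, MeasurableSet A → ∃ A',
      MeasurableSet[MeasurableSpace.generateFrom
        {t : Set X | ∃ (i : ι) (n : ℕ), t = T^[n] ⁻¹' s i}] A' ∧
      lam ((A \ A') ∪ (A' \ A)) = 0)
    -- (M2): `T` is invertible λ-a.e. on each `s i`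
    (hM2 : ∀ i, ∃ N : Set X, lam N = 0 ∧ Set.InjOn T (s i \ N))
    -- (M3): the forward image `T(s i)` belongs to `σ(α)` mod `λ`
    (hM3 : ∀ i, ∃ A', MeasurableSet[MeasurableSpace.generateFrom (Set.range s)] A' ∧
      lam ((T '' s i \ A') ∪ (A' \ T '' s i)) = 0)
    -- `μ` equivalent to `λ`, finite positive on partition elements
    (μ : Measure X) [SigmaFinite μ] (hμlam : μ ≪ lam) (hlamμ : lam ≪ μ)
    (hμs : ∀ i, 0 < μ (s i) ∧ μ (s i) < ⊤)
    -- the coding map `φ`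
    (φ : X → ℕ → ι) (hφm : Measurable φ)
    (hφ : ∀ᵐ x ∂lam, ∀ n : ℕ, T^[n] x ∈ s (φ x n))
    -- `ν` is the Markov measure on `α^ℕ` with initial distribution `μ` and transitions `p`
    (ν : Measure (ℕ → ι))
    (hν : ∀ (n : ℕ) (w : ℕ → ι),
      ν {ω : ℕ → ι | ∀ k ≤ n, ω k = w k}
        = μ (s (w 0)) * ∏ k ∈ Finset.range n, p (w k) (w (k+1))) :
    (μ.map φ = ν ↔
      ∀ (i : ι) (g : X → ℝ), Measurable g → (∃ C : ℝ, ∀ x, |g x| ≤ C) →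
        ∫ x, Set.indicator (s i) (fun _ => (1:ℝ)) x * g (T x) ∂μ
          = ∫ x, (∑' j : ι, (μ (s i) * p i j / μ (s j)).toReal
              * Set.indicator (s j) (fun _ => (1:ℝ)) x) * g x ∂μ)
    ∧ (μ.map φ = ν →
        (μ.map T = μ ↔ ν.map (fun ω n => ω (n+1)) = ν)) :=
  markov_coding_characterization_general lam T hT hns s hsm hdisj p hp hM1 μ hμlam hμs φ hφm hφ ν hν

end
end
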